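/- Suppose π(1) ≤ π(2) ≤ … ≤ π(n) and fix k ∈ {1,…,n}. Let G be the Gibbs orbit kernel for the partition of X into the blocks {1}, …, {k−1} and O_k := {k, k+1, …, n}. For every π-stationary stochastic matrix P, one has G·P·G = Π if and only if all of the following hold: (1) P(x,y) = π(y) for all x, y ∈ {1,…,k−1}; (2) Σ_{w∈O_k} P(x,w) = π(O_k) for all x ∈ {1,…,k−1}; (3) Σ_{z∈O_k} π(z)·P(z,y) = π(O_k)·π(y) for all y ∈ {1,…,k−1}; (4) Σ_{z∈O_k} Σ_{w∈O_k} π(z)·P(z,w) = π(O_k)². -/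

import Mathlib

/-!
Writing `O(x)` for the block of `x`, the kernel `G` averages over blocks with weights `π`, so
`(G P G)(x, y) = F(O(x), O(y)) / (π(O(x)) π(O(y))) · π(y)` with the block flow
`F(A, B) = ∑_{z ∈ A, w ∈ B} π(z) P(z, w)`. Hence `G P G = Π` says exactly that
`F(A, B) = π(A) π(B)` for every pair of blocks. For the partition into the singletons
`{1}, …, {k − 1}` and `O_k`, the four kinds of pairs of blocks give conditions (1)–(4).
-/

open Matrix Finset

/-- Total mass of the orbit (block) `i` under `π`. -/
noncomputable def orbMass {n k : ℕ} (π : Fin n → ℝ) (part : Fin n → Fin k) (i : Fin k) : ℝ :=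
  ∑ z ∈ Finset.univ.filter (fun z => part z = i), π z

/-- The Gibbs orbit kernel. -/
noncomputable def gibbsKer {n k : ℕ} (π : Fin n → ℝ) (part : Fin n → Fin k) :
    Matrix (Fin n) (Fin n) ℝ :=
  Matrix.of fun x y => if part y = part x then π y / orbMass π part (part x) else 0

noncomputable def blockFlow {n k : ℕ} (π : Fin n → ℝ) (part : Fin n → Fin k)
    (P : Matrix (Fin n) (Fin n) ℝ) (i j : Fin k) : ℝ :=
  ∑ z ∈ univ.filter (fun z => part z = i), ∑ w ∈ univ.filter (fun w => part w = j), π z * P z w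

section GibbsKernel

variable {n k : ℕ} (π : Fin n → ℝ) (part : Fin n → Fin k)

theorem orbMass_pos (hπ : ∀ x, 0 < π x) (x : Fin n) : 0 < orbMass π part (part x) :=
  sum_pos (fun z _ => hπ z) ⟨x, by simp⟩

theorem sum_gibbsKer_mul (x : Fin n) (f : Fin n → ℝ) :
    ∑ z, gibbsKer π part x z * f z =
      (∑ z ∈ univ.filter (fun z => part z = part x), π z * f z) / orbMass π part (part x) := by
  rw [sum_filter, sum_div]
  refine sum_congr rfl fun z _ => ?_
  simp only [gibbsKer, of_apply]
  split_ifs <;> ring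

theorem sum_mul_gibbsKer (y : Fin n) (f : Fin n → ℝ) :
    ∑ w, f w * gibbsKer π part w y =
      (∑ w ∈ univ.filter (fun w => part w = part y), f w) * π y / orbMass π part (part y) := by
  rw [sum_filter, sum_mul, sum_div]
  refine sum_congr rfl fun w _ => ?_
  simp only [gibbsKer, of_apply, eq_comm (a := part y)]
  split_ifs with h
  · rw [h]; ring
  · ring

theorem gibbsKer_mul_mul_gibbsKer_apply (P : Matrix (Fin n) (Fin n) ℝ) (x y : Fin n) :
    (gibbsKer π part * P * gibbsKer π part) x y =
      blockFlow π part P (part x) (part y) /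
        (orbMass π part (part x) * orbMass π part (part y)) * π y := by
  simp only [mul_apply, sum_mul_gibbsKer, sum_gibbsKer_mul, ← sum_div, blockFlow]
  rw [sum_comm]
  field_simp

theorem gibbsKer_mul_mul_gibbsKer_eq_iff (hπ : ∀ x, 0 < π x) (P : Matrix (Fin n) (Fin n) ℝ) :
    gibbsKer π part * P * gibbsKer π part = of (fun _ y => π y) ↔
      ∀ x y, blockFlow π part P (part x) (part y) =
        orbMass π part (part x) * orbMass π part (part y) := by
  refine ext_iff.symm.trans (forall₂_congr fun x y => ?_)
  have hmass := mul_pos (orbMass_pos π part hπ x) (orbMass_pos π part hπ y)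
  rw [gibbsKer_mul_mul_gibbsKer_apply, of_apply, mul_eq_right₀ (hπ y).ne',
    div_eq_one_iff_eq hmass.ne']

end GibbsKernel

theorem filter_block_eq_ite_of_eq_min {n k : ℕ} {pO : Fin n → Fin k}
    (hpO : ∀ x : Fin n, (pO x : ℕ) = min (x : ℕ) (k - 1)) (x : Fin n) :
    univ.filter (fun z => pO z = pO x) =
      if (x : ℕ) < k - 1 then {x} else univ.filter (fun z : Fin n => k - 1 ≤ (z : ℕ)) := by
  ext z
  split_ifs <;> simp only [mem_filter, mem_univ, true_and, mem_singleton, ← Fin.val_inj, hpO] <;>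
    omega

/-- Here `X = Fin n` is 0-indexed and the block of `x` is `pO x = min x (k − 1)`, so
`x ∈ {1,…,k−1}` reads `(x : ℕ) < k − 1` and `O_k = {z | k − 1 ≤ (z : ℕ)}`. -/
theorem stmt18_general {n k : ℕ} (hn : 0 < n) (hkn : k ≤ n)
    (π : Fin n → ℝ) (hπpos : ∀ x, 0 < π x)
    (pO : Fin n → Fin k) (hpO : ∀ x : Fin n, (pO x : ℕ) = min (x : ℕ) (k - 1))
    (P : Matrix (Fin n) (Fin n) ℝ) :
    gibbsKer π pO * P * gibbsKer π pO = Matrix.of (fun _ y => π y) ↔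
      ((∀ x y : Fin n, (x : ℕ) < k - 1 → (y : ℕ) < k - 1 → P x y = π y) ∧
       (∀ x : Fin n, (x : ℕ) < k - 1 →
          ∑ w ∈ Finset.univ.filter (fun w : Fin n => k - 1 ≤ (w : ℕ)), P x w
            = ∑ z ∈ Finset.univ.filter (fun z : Fin n => k - 1 ≤ (z : ℕ)), π z) ∧
       (∀ y : Fin n, (y : ℕ) < k - 1 →
          ∑ z ∈ Finset.univ.filter (fun z : Fin n => k - 1 ≤ (z : ℕ)), π z * P z y
            = (∑ z ∈ Finset.univ.filter (fun z : Fin n => k - 1 ≤ (z : ℕ)), π z) * π y) ∧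
       (∑ z ∈ Finset.univ.filter (fun z : Fin n => k - 1 ≤ (z : ℕ)),
          ∑ w ∈ Finset.univ.filter (fun w : Fin n => k - 1 ≤ (w : ℕ)), π z * P z w
            = (∑ z ∈ Finset.univ.filter (fun z : Fin n => k - 1 ≤ (z : ℕ)), π z) ^ 2)) := by
  rw [gibbsKer_mul_mul_gibbsKer_eq_iff π pO hπpos]
  obtain ⟨last, hlast⟩ : ∃ z : Fin n, ¬ (z : ℕ) < k - 1 := ⟨⟨n - 1, by omega⟩, by simp only; omega⟩
  simp only [blockFlow, orbMass, filter_block_eq_ite_of_eq_min hpO]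
  constructor
  · intro h
    refine ⟨fun x y hx hy => ?_, fun x hx => ?_, fun y hy => ?_, ?_⟩
    · have := h x y
      simp only [hx, hy, if_true, sum_singleton] at this
      exact mul_left_cancel₀ (hπpos x).ne' this
    · have := h x last
      simp only [hx, hlast, if_true, if_false, sum_singleton, ← mul_sum] at this
      exact mul_left_cancel₀ (hπpos x).ne' this
    · simpa only [hy, hlast, if_true, if_false, sum_singleton] using h last y
    · simpa only [hlast, if_false, sq] using h last last
  · rintro ⟨h1, h2, h3, h4⟩ x y
    by_cases hx : (x : ℕ) < k - 1 <;> by_cases hy : (y : ℕ) < k - 1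
    · simp only [hx, hy, if_true, sum_singleton, h1 x y hx hy]
    · simp only [hx, hy, if_true, if_false, sum_singleton, ← mul_sum, h2 x hx]
    · simp only [hx, hy, if_true, if_false, sum_singleton, h3 y hy]
    · simp only [hx, hy, if_false, h4, sq]

/-- for the partition into the `k − 1` smallest singletons and the block
`O_k` of the `n − k + 1` largest states (encoded, 0-indexed, by `pO x = min x (k−1)`;
so `x ∈ {1,…,k−1}` becomes `(x : ℕ) < k − 1` and `O_k = {z : k − 1 ≤ (z : ℕ)}`),
a `π`-stationary stochastic `P` satisfies `GPG = Π` iff conditions (1)–(4) hold. -/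
theorem stmt18 {n k : ℕ} (hn : 0 < n) (hk : 0 < k) (hkn : k ≤ n)
    (π : Fin n → ℝ) (hπpos : ∀ x, 0 < π x) (hπsum : ∑ x, π x = 1)
    (hmono : ∀ x y : Fin n, x ≤ y → π x ≤ π y)
    (pO : Fin n → Fin k) (hpO : ∀ x : Fin n, (pO x : ℕ) = min (x : ℕ) (k - 1))
    (P : Matrix (Fin n) (Fin n) ℝ)
    (hPnonneg : ∀ x y, 0 ≤ P x y) (hProw : ∀ x, ∑ y, P x y = 1)
    (hPstat : ∀ y, ∑ x, π x * P x y = π y) :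
    gibbsKer π pO * P * gibbsKer π pO = Matrix.of (fun _ y => π y) ↔
      ((∀ x y : Fin n, (x : ℕ) < k - 1 → (y : ℕ) < k - 1 → P x y = π y) ∧
       (∀ x : Fin n, (x : ℕ) < k - 1 →
          ∑ w ∈ Finset.univ.filter (fun w : Fin n => k - 1 ≤ (w : ℕ)), P x w
            = ∑ z ∈ Finset.univ.filter (fun z : Fin n => k - 1 ≤ (z : ℕ)), π z) ∧
       (∀ y : Fin n, (y : ℕ) < k - 1 →
          ∑ z ∈ Finset.univ.filter (fun z : Fin n => k - 1 ≤ (z : ℕ)), π z * P z y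
            = (∑ z ∈ Finset.univ.filter (fun z : Fin n => k - 1 ≤ (z : ℕ)), π z) * π y) ∧
       (∑ z ∈ Finset.univ.filter (fun z : Fin n => k - 1 ≤ (z : ℕ)),
          ∑ w ∈ Finset.univ.filter (fun w : Fin n => k - 1 ≤ (w : ℕ)), π z * P z w
            = (∑ z ∈ Finset.univ.filter (fun z : Fin n => k - 1 ≤ (z : ℕ)), π z) ^ 2)) :=
  stmt18_general hn hkn π hπpos pO hpO P
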